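/- arXiv:0907.0936 — 5 statements merged into one kernel-verified Lean document; each statement's English description precedes it below -/
import Mathlib

section
/- Let u be a fixed-point-free involution on {1,...,2n} and t = (a,b) a transposition with u(a) ≠ b. Then there is exactly one transposition t' ≠ t with t'⁻¹ u t' = t⁻¹ u t, namely t' = (u(a), u(b)). -/
open Equiv Function

/-- A fixed-point-free involution of `Fin m`. -/
def IsFpfInvolution {m : ℕ} (u : Equiv.Perm (Fin m)) : Prop :=
  u * u = 1 ∧ ∀ i, u i ≠ i

/-- The number of inversions of a permutation (its Coxeter length). -/
def invCount {m : ℕ} (u : Equiv.Perm (Fin m)) : ℕ :=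
  (Finset.univ.filter (fun p : Fin m × Fin m => p.1 < p.2 ∧ u p.2 < u p.1)).card

/-- One step in the Bruhat order: right multiplication by a transposition
which increases the length. -/
def BruhatStep {m : ℕ} (x y : Equiv.Perm (Fin m)) : Prop :=
  (∃ a b : Fin m, a ≠ b ∧ y = x * Equiv.swap a b) ∧ invCount x < invCount y

/-- The Bruhat order on the symmetric group. -/
def BruhatLE {m : ℕ} (x y : Equiv.Perm (Fin m)) : Prop :=
  Relation.ReflTransGen BruhatStep x y

/-- The dual of the Bruhat order (restricted to fixed-point-free involutions,
this is the order `⪯` with minimum element `w₀`). -/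
def DualLE {m : ℕ} (x y : Equiv.Perm (Fin m)) : Prop := BruhatLE y x

/-- Strict version of `DualLE`. -/
def DualLT {m : ℕ} (x y : Equiv.Perm (Fin m)) : Prop := BruhatLE y x ∧ x ≠ y

/-! Conjugating an involution `u` by `swap c d` with `u c ≠ d` changes it exactly at `c`, `d`,
`u c`, `u d`, and sends `c` to `u d`. So if it agrees with the conjugate by `swap a b`, then
`c ∈ {a, b, u a, u b}`, and comparing the values at `c` excludes `a` and `b`; likewise for `d`. -/

namespace Equiv.Perm

variable {α : Type*} [DecidableEq α] {u : Perm α}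

theorem swap_conj_apply_of_ne {a b x : α} (hxa : x ≠ a) (hxb : x ≠ b) (hua : u x ≠ a)
    (hub : u x ≠ b) : (swap a b * u * swap a b) x = u x := by
  simp only [mul_apply, swap_apply_of_ne_of_ne hxa hxb, swap_apply_of_ne_of_ne hua hub]

theorem swap_conj_apply_right {a b : α} (hua : u a ≠ a) (hub : u a ≠ b) :
    (swap a b * u * swap a b) b = u a := by
  simp only [mul_apply, swap_apply_right, swap_apply_of_ne_of_ne hua hub]

theorem swap_conj_apply_left {a b : α} (hub : u b ≠ b) (hua : u b ≠ a) :
    (swap a b * u * swap a b) a = u b := by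
  rw [swap_comm]
  exact swap_conj_apply_right hub hua

theorem swap_conj_eq_self_of_apply_eq (hu : Involutive u) {c d : α} (h : u c = d) :
    swap c d * u * swap c d = u := by
  have hcomm : u * swap c d = swap c d * u := by
    rw [mul_swap_eq_swap_mul, h, ← hu.eq_iff.mp h, swap_comm]
  rw [mul_assoc, hcomm, swap_mul_self_mul]

/-- `swap (u a) (u b)` is the conjugate of `swap a b` by `u`, and for a fixed-point-free `u` with
`u a ≠ b` the two transpositions have disjoint supports, so they commute. -/
theorem swap_apply_apply_conj_eq (hu : Involutive u) (hfix : ∀ x, u x ≠ x) {a b : α}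
    (hab : a ≠ b) (h : u a ≠ b) :
    swap (u a) (u b) * u * swap (u a) (u b) = swap a b * u * swap a b := by
  have hba : u b ≠ a := fun e => h (hu.eq_iff.mp e).symm
  have hcomm : Commute (swap a b) (swap (u a) (u b)) :=
    (disjoint_swap_swap (by simp [hab, (hfix a).symm, h.symm, hba.symm, (hfix b).symm,
      hu.injective.ne hab])).commute
  have hus : u * swap (u a) (u b) = swap a b * u := by rw [mul_swap_eq_swap_mul, hu a, hu b]
  rw [mul_assoc, hus, ← mul_assoc, ← hcomm.eq, mul_assoc, ← mul_swap_eq_swap_mul, mul_assoc]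

theorem swap_apply_apply_ne_swap (hfix : ∀ x, u x ≠ x) {a b : α} (hab : a ≠ b) (h : u a ≠ b) :
    swap (u a) (u b) ≠ swap a b := by
  intro heq
  have := congr($heq (u a))
  rw [swap_apply_left, swap_apply_of_ne_of_ne (hfix a) h] at this
  exact hab (u.injective this).symm

theorem apply_eq_or_apply_eq_of_swap_conj_eq (hu : Involutive u) (hfix : ∀ x, u x ≠ x)
    {a b c d : α} (h : u a ≠ b) (hcd : c ≠ d) (hdc : u d ≠ c) (hne : swap c d ≠ swap a b)
    (heq : swap c d * u * swap c d = swap a b * u * swap a b) : u c = a ∨ u c = b := by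
  have hvc : (swap a b * u * swap a b) c = u d := heq ▸ swap_conj_apply_left (hfix d) hdc
  by_contra! hc
  rcases eq_or_ne c a with rfl | hca
  · rw [swap_conj_apply_left (hfix b) fun e => h (hu.eq_iff.mp e).symm] at hvc
    exact hne (by rw [u.injective hvc])
  rcases eq_or_ne c b with rfl | hcb
  · rw [swap_conj_apply_right (hfix a) h] at hvc
    exact hne (by rw [u.injective hvc, swap_comm])
  rw [swap_conj_apply_of_ne hca hcb hc.1 hc.2] at hvc
  exact hcd (u.injective hvc)

theorem swap_eq_swap_apply_apply_of_swap_conj_eq (hu : Involutive u) (hfix : ∀ x, u x ≠ x)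
    {a b c d : α} (hab : a ≠ b) (h : u a ≠ b) (hcd : c ≠ d) (hne : swap c d ≠ swap a b)
    (heq : swap c d * u * swap c d = swap a b * u * swap a b) :
    swap c d = swap (u a) (u b) := by
  have hcd' : u c ≠ d := by
    intro hc
    have := congr($heq a)
    rw [swap_conj_eq_self_of_apply_eq hu hc,
      swap_conj_apply_left (hfix b) fun e => h (hu.eq_iff.mp e).symm] at this
    exact hab (u.injective this)
  have hdc' : u d ≠ c := fun e => hcd' (hu.eq_iff.mp e).symm
  have hc := apply_eq_or_apply_eq_of_swap_conj_eq hu hfix h hcd hdc' hne heq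
  have hd := apply_eq_or_apply_eq_of_swap_conj_eq hu hfix h hcd.symm hcd'
    (by rwa [swap_comm]) (by rwa [swap_comm])
  rw [hu.eq_iff, hu.eq_iff] at hc hd
  rcases hc with rfl | rfl <;> rcases hd with rfl | rfl
  all_goals first | exact absurd rfl hcd | rfl | exact swap_comm _ _

end Equiv.Perm

/-- if `u` is a fixed-point-free involution and `t = (a,b)` with
`u a ≠ b`, then `t' = (u a, u b)` is the unique transposition other than `t`
conjugating `u` to the same element. -/
theorem fpf_conj_swap_unique_other {n : ℕ} (u : Equiv.Perm (Fin (2 * n)))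
    (hu : IsFpfInvolution u) (a b : Fin (2 * n)) (hab : a ≠ b) (h : u a ≠ b) :
    Equiv.swap (u a) (u b) ≠ Equiv.swap a b ∧
    (Equiv.swap (u a) (u b))⁻¹ * u * Equiv.swap (u a) (u b) =
      (Equiv.swap a b)⁻¹ * u * Equiv.swap a b ∧
    ∀ t' : Equiv.Perm (Fin (2 * n)), t'.IsSwap → t' ≠ Equiv.swap a b →
      t'⁻¹ * u * t' = (Equiv.swap a b)⁻¹ * u * Equiv.swap a b →
      t' = Equiv.swap (u a) (u b) := by
  obtain ⟨hu2, hfix⟩ := hu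
  have hinv : Involutive u := fun x => by rw [← Perm.mul_apply, hu2, Perm.one_apply]
  simp only [swap_inv]
  refine ⟨Perm.swap_apply_apply_ne_swap hfix hab h,
    Perm.swap_apply_apply_conj_eq hinv hfix hab h, ?_⟩
  rintro _ ⟨c, d, hcd, rfl⟩ hne heq
  rw [swap_inv] at heq
  exact Perm.swap_eq_swap_apply_apply_of_swap_conj_eq hinv hfix hab h hcd hne heq
end

section
/- In S_{2n} with θ(x) = w₀ x w₀ where w₀ : i ↦ 2n+1−i, the map x ↦ w₀ x is a bijection from the set F_{2n} of fixed-point-free involutions to the set of twisted identities ι(θ) = { θ(w⁻¹)w : w ∈ S_{2n} }. -/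
/-!
A fixed-point-free involution of `Fin m` is a product of `m / 2` disjoint transpositions, so
all of them are conjugate; for `m = 2n` the reversal `w₀` is one of them. Hence the
fixed-point-free involutions are exactly the conjugates `c w₀ c⁻¹`, and
`w₀ (c w₀ c⁻¹) = θ(c) c⁻¹ = θ(w⁻¹) w` for `w = c⁻¹`. Injectivity is cancellation of `w₀`.
-/

open Equiv

open Equiv.Perm

namespace IsFpfInvolution

variable {m : ℕ} {u v : Perm (Fin m)}

lemma support_eq_univ (hu : IsFpfInvolution u) : u.support = Finset.univ := by
  ext i
  simp [mem_support, hu.2 i]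

lemma cycleType_eq (hu : IsFpfInvolution u) : u.cycleType = Multiset.replicate (m / 2) 2 := by
  have : Fact (Nat.Prime 2) := ⟨Nat.prime_two⟩
  have hrep := cycleType_of_pow_prime_eq_one (p := 2) (by rw [sq]; exact hu.1)
  have hsum : u.cycleType.sum = m := by
    rw [sum_cycleType, hu.support_eq_univ, Finset.card_univ, Fintype.card_fin]
  rw [hrep, Multiset.sum_replicate, smul_eq_mul] at hsum
  rw [hrep]
  congr 1
  omega

lemma isConj (hu : IsFpfInvolution u) (hv : IsFpfInvolution v) : IsConj u v := by
  rw [isConj_iff_cycleType_eq, hu.cycleType_eq, hv.cycleType_eq]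

lemma of_isConj (hu : IsFpfInvolution u) (h : IsConj u v) : IsFpfInvolution v := by
  obtain ⟨c, rfl⟩ := isConj_iff.mp h
  refine ⟨?_, fun i hi => hu.2 (c⁻¹ i) ?_⟩
  · calc c * u * c⁻¹ * (c * u * c⁻¹) = c * (u * u) * c⁻¹ := by group
      _ = 1 := by rw [hu.1]; group
  · simpa [mul_apply, eq_symm_apply] using hi

end IsFpfInvolution

lemma isFpfInvolution_revPerm {n : ℕ} : IsFpfInvolution (Fin.revPerm : Perm (Fin (2 * n))) := by
  refine ⟨by ext i; simp, fun i hi => ?_⟩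
  have := congrArg Fin.val hi
  rw [Fin.revPerm_apply, Fin.val_rev] at this
  omega

/-- in `S_{2n}` with `θ(x) = w₀ x w₀`, the map `x ↦ w₀ x` is a
bijection from the fixed-point-free involutions onto the twisted identities
`ι(θ) = { θ(w⁻¹) w : w ∈ S_{2n} }`. -/
theorem revPerm_mul_bijOn_twisted_identities {n : ℕ} :
    Set.BijOn (fun u : Equiv.Perm (Fin (2 * n)) => (Fin.revPerm : Equiv.Perm (Fin (2 * n))) * u)
      {u : Equiv.Perm (Fin (2 * n)) | IsFpfInvolution u}
      {u : Equiv.Perm (Fin (2 * n)) | ∃ w : Equiv.Perm (Fin (2 * n)),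
        u = (Fin.revPerm * w⁻¹ * Fin.revPerm) * w} := by
  set w₀ : Perm (Fin (2 * n)) := Fin.revPerm
  have hw₀ : IsFpfInvolution w₀ := isFpfInvolution_revPerm
  refine ⟨fun u hu => ?_, (mul_right_injective w₀).injOn, ?_⟩
  · obtain ⟨c, rfl⟩ := isConj_iff.mp (hw₀.isConj hu)
    exact ⟨c⁻¹, by group⟩
  · rintro _ ⟨w, rfl⟩
    exact ⟨w⁻¹ * w₀ * w, hw₀.of_isConj (isConj_iff.mpr ⟨w⁻¹, by group⟩), by group⟩
end

section
/- Let w be a fixed-point-free involution on {1,...,2n}, let u ⪯ w with u ≠ w₀, and let r = (i,j) with i < j be a transposition such that u ⋆ r ⪯ u and u ⋆ r ≠ u. Set a = u(i), b = u(j) (so a < b). Then for every transposition t with support disjoint from {a,b,i,j} such that u ⋆ t ≠ u and u ⋆ t ⪯ w, at least one of u ⋆ (t r) ⪯ w or u ⋆ (r t) ⪯ w holds. -/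
open Equiv

/-!
Write `a = u i`, `b = u j`. Since `u` is an involution, `swap i j * u = u * swap a b`, so
`u ⋆ r = u * swap a b * swap i j`; and `u ⋆ r ≠ u` forces `{a, b} ∩ {i, j} = ∅`. If `b < a`, both
factors would be length-decreasing steps, so `u ⋆ r` would lie strictly below `u` in Bruhat order,
contradicting `u ⋆ r ≺ u`; hence `a < b`. The transposition `t` fixes `a, b, i, j`, so
`v = u ⋆ t` still maps `a ↦ i`, `b ↦ j`, `i ↦ a`, `j ↦ b`, and the same two transpositions now
raise the length: `v ≤ v * swap a b ≤ v * swap a b * swap i j = v ⋆ r = u ⋆ (t r)` in Bruhat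
order. With `w ≤ v` this gives `u ⋆ (t r) ⪯ w`.
-/

section Inversions

variable {m : ℕ}

def inversions (g : Perm (Fin m)) : Finset (Fin m × Fin m) :=
  Finset.univ.filter (fun e => e.1 < e.2 ∧ g e.2 < g e.1)

lemma mem_inversions {g : Perm (Fin m)} {e : Fin m × Fin m} :
    e ∈ inversions g ↔ e.1 < e.2 ∧ g e.2 < g e.1 := by
  simp [inversions]

def transferPair (p q : Fin m) (e : Fin m × Fin m) : Fin m × Fin m :=
  if swap p q e.1 < swap p q e.2 then (swap p q e.1, swap p q e.2) else e

lemma swap_apply_lt_swap_apply_of_reversed {g : Perm (Fin m)} {p q x y : Fin m} (hpq : p < q)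
    (hg : g p < g q) (hxy : x < y) (hgxy : g y < g x) (hσ : swap p q y < swap p q x) :
    g (swap p q y) < g (swap p q x) := by
  simp only [swap_apply_def] at *
  split_ifs at * <;> grind

lemma mapsTo_transferPair {g : Perm (Fin m)} {p q : Fin m} (hpq : p < q) (hg : g p < g q) :
    Set.MapsTo (transferPair p q) (inversions g) ((inversions (g * swap p q)).erase (p, q)) := by
  rintro ⟨x, y⟩ hxy
  rw [Finset.mem_coe, mem_inversions] at hxy
  rw [Finset.mem_coe, Finset.mem_erase, mem_inversions]
  simp only [transferPair, Perm.mul_apply]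
  split_ifs with h
  · refine ⟨?_, h, by simpa using hxy.2⟩
    intro hpq'
    simp only [Prod.mk.injEq, swap_apply_eq_iff, swap_apply_left, swap_apply_right] at hpq'
    obtain ⟨rfl, rfl⟩ := hpq'
    exact lt_asymm hxy.1 hpq
  · have hne : swap p q y ≠ swap p q x := (swap p q).injective.ne hxy.1.ne'
    refine ⟨?_, hxy.1, swap_apply_lt_swap_apply_of_reversed hpq hg hxy.1 hxy.2
      ((not_lt.1 h).lt_of_ne hne)⟩
    rintro ⟨rfl, rfl⟩
    exact hxy.2.not_gt hg

lemma injOn_transferPair (g : Perm (Fin m)) (p q : Fin m) :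
    Set.InjOn (transferPair p q) (inversions g) := by
  rintro ⟨x₁, y₁⟩ h₁ ⟨x₂, y₂⟩ h₂ heq
  rw [Finset.mem_coe, mem_inversions] at h₁ h₂
  simp only [transferPair] at heq
  split_ifs at heq with k₁ k₂ k₂ <;> simp only [Prod.mk.injEq] at heq ⊢
  · exact ⟨(swap p q).injective heq.1, (swap p q).injective heq.2⟩
  · obtain ⟨rfl, rfl⟩ := heq
    simp only [swap_apply_self, not_lt] at k₂
    exact (k₂.not_gt h₁.1).elim
  · obtain ⟨rfl, rfl⟩ := heq
    simp only [swap_apply_self, not_lt] at k₁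
    exact (k₁.not_gt h₂.1).elim
  · exact heq

lemma invCount_lt_mul_swap {g : Perm (Fin m)} {p q : Fin m} (hpq : p < q) (hg : g p < g q) :
    invCount g < invCount (g * swap p q) := by
  have hpq_mem : (p, q) ∈ inversions (g * swap p q) := by
    simpa [mem_inversions] using ⟨hpq, hg⟩
  calc invCount g ≤ ((inversions (g * swap p q)).erase (p, q)).card :=
        Finset.card_le_card_of_injOn _ (mapsTo_transferPair hpq hg) (injOn_transferPair g p q)
    _ < invCount (g * swap p q) := Finset.card_erase_lt_of_mem hpq_mem

end Inversions

section Bruhat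

variable {m : ℕ}

lemma invCount_le_of_bruhatLE {x y : Perm (Fin m)} (h : BruhatLE x y) :
    invCount x ≤ invCount y := by
  induction h with
  | refl => exact le_rfl
  | tail _ hstep ih => exact ih.trans hstep.2.le

lemma invCount_lt_of_bruhatLE_of_ne {x y : Perm (Fin m)} (h : BruhatLE x y) (hne : x ≠ y) :
    invCount x < invCount y := by
  rcases Relation.ReflTransGen.cases_tail h with rfl | ⟨z, hxz, hzy⟩
  · exact absurd rfl hne
  · exact (invCount_le_of_bruhatLE hxz).trans_lt hzy.2

lemma bruhatStep_mul_swap {g : Perm (Fin m)} {p q : Fin m} (hpq : p < q) (hg : g p < g q) :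
    BruhatStep g (g * swap p q) :=
  ⟨⟨p, q, hpq.ne, rfl⟩, invCount_lt_mul_swap hpq hg⟩

end Bruhat

section Conjugation

variable {α : Type*} [DecidableEq α]

lemma swap_inv_mul_mul_swap_eq {g : Perm α} {a b i j : α} (hga : g a = i) (hgb : g b = j) :
    (swap i j)⁻¹ * g * swap i j = g * swap a b * swap i j := by
  have hcomm : swap i j * g = g * swap a b := by
    rw [← hga, ← hgb, swap_apply_apply, inv_mul_cancel_right]
  rw [swap_inv, hcomm]

lemma swap_inv_mul_mul_swap_apply {g : Perm α} {c d x : α} (hc : x ≠ c) (hd : x ≠ d) :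
    ((swap c d)⁻¹ * g * swap c d) x = swap c d (g x) := by
  simp [swap_apply_of_ne_of_ne hc hd]

lemma swap_inv_mul_mul_swap_apply_of_ne {g : Perm α} {c d x : α} (hc : c ≠ x) (hd : d ≠ x)
    (hgc : c ≠ g x) (hgd : d ≠ g x) : ((swap c d)⁻¹ * g * swap c d) x = g x := by
  rw [swap_inv_mul_mul_swap_apply hc.symm hd.symm, swap_apply_of_ne_of_ne hgc.symm hgd.symm]

end Conjugation

lemma bruhatLE_swap_inv_mul_mul_swap {m : ℕ} {g : Perm (Fin m)} {a b i j : Fin m}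
    (hga : g a = i) (hgb : g b = j) (hab : a < b) (hij : i < j) (hgij : g i < g j)
    (hai : a ≠ i) (haj : a ≠ j) (hbi : b ≠ i) (hbj : b ≠ j) :
    BruhatLE g ((swap i j)⁻¹ * g * swap i j) := by
  rw [swap_inv_mul_mul_swap_eq hga hgb]
  have hstep₁ : BruhatStep g (g * swap a b) := bruhatStep_mul_swap hab (by rwa [hga, hgb])
  have hstep₂ : BruhatStep (g * swap a b) (g * swap a b * swap i j) := by
    refine bruhatStep_mul_swap hij ?_
    simpa [swap_apply_of_ne_of_ne hai.symm hbi.symm, swap_apply_of_ne_of_ne haj.symm hbj.symm]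
      using hgij
  exact (Relation.ReflTransGen.single hstep₁).tail hstep₂

namespace IsFpfInvolution

variable {m : ℕ} {u : Perm (Fin m)}

lemma apply_apply (hu : IsFpfInvolution u) (x : Fin m) : u (u x) = x := by
  simpa using congrArg (· x) hu.1

lemma apply_ne_of_swap_conj_ne (hu : IsFpfInvolution u) {i j : Fin m}
    (hne : (swap i j)⁻¹ * u * swap i j ≠ u) : u i ≠ j := by
  intro h
  apply hne
  rw [swap_inv_mul_mul_swap_eq (show u j = i by rw [← h, hu.apply_apply]) h, swap_comm,
    mul_assoc, swap_mul_self, mul_one]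

lemma apply_lt_apply_of_dualLT_swap_conj (hu : IsFpfInvolution u) {i j : Fin m} (hij : i < j)
    (hdown : DualLT ((swap i j)⁻¹ * u * swap i j) u) : u i < u j := by
  have hui : u i ≠ j := hu.apply_ne_of_swap_conj_ne hdown.2
  have huj : u j ≠ i := fun h => hui (by rw [← h, hu.apply_apply])
  refine (lt_or_gt_of_ne (u.injective.ne hij.ne)).resolve_right fun hba => ?_
  set h := (swap i j)⁻¹ * u * swap i j with h_def
  -- `u = h ⋆ r`, and `h` maps `u j ↦ i`, `u i ↦ j`, so `b < a` would put `h` strictly below `u`.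
  have hh_back : (swap i j)⁻¹ * h * swap i j = u := by simp [h_def, mul_assoc]
  have hsi : swap i j (u j) = u j := swap_apply_of_ne_of_ne huj (hu.2 j)
  have hsj : swap i j (u i) = u i := swap_apply_of_ne_of_ne (hu.2 i) hui
  have hup : BruhatLE h u := hh_back ▸ bruhatLE_swap_inv_mul_mul_swap (a := u j) (b := u i)
    (by rw [h_def, swap_inv_mul_mul_swap_apply huj (hu.2 j), hu.apply_apply, swap_apply_right])
    (by rw [h_def, swap_inv_mul_mul_swap_apply (hu.2 i) hui, hu.apply_apply, swap_apply_left])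
    hba hij (by simpa [h_def, hsi, hsj] using hba) huj (hu.2 j) (hu.2 i) hui
  exact (invCount_lt_of_bruhatLE_of_ne hup hdown.2).not_ge (invCount_le_of_bruhatLE hdown.1)

end IsFpfInvolution

theorem disjoint_support_case_general {n : ℕ} (u w : Equiv.Perm (Fin (2 * n)))
    (hu : IsFpfInvolution u)
    (i j : Fin (2 * n)) (hij : i < j)
    (hdown : DualLT ((Equiv.swap i j)⁻¹ * u * Equiv.swap i j) u)
    (c d : Fin (2 * n))
    (hdisj : ({c, d} : Set (Fin (2 * n))) ∩ {u i, u j, i, j} = ∅)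
    (htw : DualLE ((Equiv.swap c d)⁻¹ * u * Equiv.swap c d) w) :
    DualLE ((Equiv.swap c d * Equiv.swap i j)⁻¹ * u *
        (Equiv.swap c d * Equiv.swap i j)) w ∨
      DualLE ((Equiv.swap i j * Equiv.swap c d)⁻¹ * u *
        (Equiv.swap i j * Equiv.swap c d)) w := by
  have hui : u i ≠ j := hu.apply_ne_of_swap_conj_ne hdown.2
  have huj : u j ≠ i := fun h => hui (by rw [← h, hu.apply_apply])
  have hab : u i < u j := hu.apply_lt_apply_of_dualLT_swap_conj hij hdown
  simp only [Set.ext_iff, Set.mem_inter_iff, Set.mem_insert_iff, Set.mem_singleton_iff,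
    Set.mem_empty_iff_false, iff_false, not_and, not_or, forall_eq_or_imp, forall_eq] at hdisj
  obtain ⟨⟨hca, hcb, hci, hcj⟩, hda, hdb, hdi, hdj⟩ := hdisj
  set v := (swap c d)⁻¹ * u * swap c d
  have hup : BruhatLE v ((swap i j)⁻¹ * v * swap i j) :=
    bruhatLE_swap_inv_mul_mul_swap (a := u i) (b := u j)
      (by rw [swap_inv_mul_mul_swap_apply_of_ne hca hda (by rwa [hu.apply_apply])
        (by rwa [hu.apply_apply]), hu.apply_apply])
      (by rw [swap_inv_mul_mul_swap_apply_of_ne hcb hdb (by rwa [hu.apply_apply])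
        (by rwa [hu.apply_apply]), hu.apply_apply])
      hab hij
      (by rwa [swap_inv_mul_mul_swap_apply_of_ne hci hdi hca hda,
        swap_inv_mul_mul_swap_apply_of_ne hcj hdj hcb hdb])
      (hu.2 i) hui huj (hu.2 j)
  have hconj : (swap c d * swap i j)⁻¹ * u * (swap c d * swap i j)
      = (swap i j)⁻¹ * v * swap i j := by
    simp only [v, mul_inv_rev, mul_assoc]
  left
  rw [DualLE, hconj]
  exact htw.trans hup

/-- let `u ⪯ w` with `u ≠ w₀` and `r = (i,j)`, `i < j`, a
transposition with `u ⋆ r ≺ u`; set `a = u i`, `b = u j`. Then for every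
transposition `t` with support disjoint from `{a, b, i, j}` such that
`u ⋆ t ≠ u` and `u ⋆ t ⪯ w`, at least one of `u ⋆ (t r) ⪯ w` or
`u ⋆ (r t) ⪯ w` holds. -/
theorem disjoint_support_case {n : ℕ} (u w : Equiv.Perm (Fin (2 * n)))
    (hu : IsFpfInvolution u) (hw : IsFpfInvolution w)
    (huw : DualLE u w) (hu0 : u ≠ Fin.revPerm)
    (i j : Fin (2 * n)) (hij : i < j)
    (hdown : DualLT ((Equiv.swap i j)⁻¹ * u * Equiv.swap i j) u)
    (c d : Fin (2 * n)) (hcd : c ≠ d)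
    (hdisj : ({c, d} : Set (Fin (2 * n))) ∩ {u i, u j, i, j} = ∅)
    (hne : (Equiv.swap c d)⁻¹ * u * Equiv.swap c d ≠ u)
    (htw : DualLE ((Equiv.swap c d)⁻¹ * u * Equiv.swap c d) w) :
    DualLE ((Equiv.swap c d * Equiv.swap i j)⁻¹ * u *
        (Equiv.swap c d * Equiv.swap i j)) w ∨
      DualLE ((Equiv.swap i j * Equiv.swap c d)⁻¹ * u *
        (Equiv.swap i j * Equiv.swap c d)) w :=
  disjoint_support_case_general u w hu i j hij hdown c d hdisj htw
end

section
/- Let u be a fixed-point-free involution and r = (i,j) a transposition with i < j, u(i) = a, u(j) = b, a < b, b ≠ i (so u ⋆ r ≺ u, decreasing conjugation). If t = (i,b), then (t⁻¹ u t)(i) = j; consequently u ⋆ (t r) = u ⋆ t. Similarly if t = (j,a) then (t⁻¹ u t)(i) = j and u ⋆ (t r) = u ⋆ t. -/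
open Equiv

namespace Equiv.Perm

variable {α : Type*} [DecidableEq α]

theorem swap_conj_eq_self {w : Perm α} {x y : α} (hx : w x = y) (hy : w y = x) :
    (swap x y)⁻¹ * w * swap x y = w := by
  rw [swap_inv, mul_assoc, mul_swap_eq_swap_mul, hx, hy, swap_comm, ← mul_assoc, swap_mul_self,
    one_mul]

theorem mul_swap_conj_eq_conj {u t : Perm α} {x y : α} (hx : (t⁻¹ * u * t) x = y)
    (hy : (t⁻¹ * u * t) y = x) :
    (t * swap x y)⁻¹ * u * (t * swap x y) = t⁻¹ * u * t := by
  calc (t * swap x y)⁻¹ * u * (t * swap x y) = (swap x y)⁻¹ * (t⁻¹ * u * t) * swap x y := by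
        simp only [mul_inv_rev, mul_assoc]
    _ = t⁻¹ * u * t := swap_conj_eq_self hx hy

/-- Conjugating by `(x c)` turns the 2-cycle `(y c)` of `u` into the 2-cycle `(x y)`. -/
theorem swap_conj_apply_of_apply_eq {u : Perm α} {x y c : α} (hyc : u y = c) (hcy : u c = y)
    (hxy : x ≠ y) (hy : y ≠ c) :
    ((swap x c)⁻¹ * u * swap x c) x = y ∧ ((swap x c)⁻¹ * u * swap x c) y = x := by
  simp only [swap_inv, mul_apply, swap_apply_left, hcy, swap_apply_of_ne_of_ne hxy.symm hy, hyc,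
    swap_apply_right, and_self]

end Equiv.Perm

theorem IsFpfInvolution.involutive {m : ℕ} {u : Perm (Fin m)} (hu : IsFpfInvolution u) :
    Function.Involutive u := fun x => by
  rw [← Perm.mul_apply, hu.1, Perm.one_apply]

theorem cases_three_four_general {n : ℕ} (u : Equiv.Perm (Fin (2 * n)))
    (hu : IsFpfInvolution u) (i j a b : Fin (2 * n)) (hij : i < j)
    (ha : u i = a) (hb : u j = b) :
    (((Equiv.swap i b)⁻¹ * u * Equiv.swap i b) i = j ∧
      (Equiv.swap i b * Equiv.swap i j)⁻¹ * u * (Equiv.swap i b * Equiv.swap i j) =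
        (Equiv.swap i b)⁻¹ * u * Equiv.swap i b) ∧
    (((Equiv.swap j a)⁻¹ * u * Equiv.swap j a) i = j ∧
      (Equiv.swap j a * Equiv.swap i j)⁻¹ * u * (Equiv.swap j a * Equiv.swap i j) =
        (Equiv.swap j a)⁻¹ * u * Equiv.swap j a) := by
  have hinv := hu.involutive
  have hub : u b = j := by rw [← hb, hinv]
  have hua : u a = i := by rw [← ha, hinv]
  obtain ⟨hi₁, hj₁⟩ := Perm.swap_conj_apply_of_apply_eq hb hub hij.ne (hb ▸ (hu.2 j).symm)
  obtain ⟨hj₂, hi₂⟩ := Perm.swap_conj_apply_of_apply_eq ha hua hij.ne' (ha ▸ (hu.2 i).symm)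
  exact ⟨⟨hi₁, Perm.mul_swap_conj_eq_conj hi₁ hj₁⟩,
    ⟨hi₂, Perm.mul_swap_conj_eq_conj hi₂ hj₂⟩⟩

/-- for a fixed-point-free involution `u` and `r = (i,j)`, `i < j`,
`a = u i`, `b = u j`, `a < b`, `b ≠ i`: conjugating by `t = (i,b)` (resp.
`t = (j,a)`) produces an involution sending `i` to `j`, hence conjugation by
`t r` agrees with conjugation by `t`. -/
theorem cases_three_four {n : ℕ} (u : Equiv.Perm (Fin (2 * n)))
    (hu : IsFpfInvolution u) (i j a b : Fin (2 * n)) (hij : i < j)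
    (ha : u i = a) (hb : u j = b) (hab : a < b) (hbi : b ≠ i) :
    (((Equiv.swap i b)⁻¹ * u * Equiv.swap i b) i = j ∧
      (Equiv.swap i b * Equiv.swap i j)⁻¹ * u * (Equiv.swap i b * Equiv.swap i j) =
        (Equiv.swap i b)⁻¹ * u * Equiv.swap i b) ∧
    (((Equiv.swap j a)⁻¹ * u * Equiv.swap j a) i = j ∧
      (Equiv.swap j a * Equiv.swap i j)⁻¹ * u * (Equiv.swap j a * Equiv.swap i j) =
        (Equiv.swap j a)⁻¹ * u * Equiv.swap j a) :=
  cases_three_four_general u hu i j a b hij ha hb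
end

section
/- In type A_{2n−1}, with W = S_{2n} and diagram involution θ(x) = w₀ x w₀, the set of twisted identities ι(θ) = { θ(w⁻¹)w : w ∈ W } contains no reflection; that is, for no x ∈ S_{2n} is θ(x⁻¹)x a transposition. -/
open Equiv

/-- in `S_{2n}` with `θ(x) = w₀ x w₀`, no twisted identity
`θ(x⁻¹) x = w₀ x⁻¹ w₀ x` is a transposition. -/
theorem twisted_identity_not_swap {n : ℕ} (x : Equiv.Perm (Fin (2 * n))) :
    ¬ ((Fin.revPerm : Equiv.Perm (Fin (2 * n))) * x⁻¹ * Fin.revPerm * x).IsSwap := by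
  rintro ⟨a, b, hab, heq⟩
  set w : Equiv.Perm (Fin (2 * n)) := Fin.revPerm with hwdef
  have hrevne : ∀ i : Fin (2 * n), Fin.rev i ≠ i := by
    intro i h
    have h1 := congrArg Fin.val h
    rw [Fin.val_rev] at h1
    omega
  have hw : w * w = 1 := by
    ext i
    simp [hwdef, Fin.rev_rev]
  have hg : x⁻¹ * w * x = w * Equiv.swap a b := by
    calc x⁻¹ * w * x = w * (w * x⁻¹ * w * x) := by
          rw [show w * (w * x⁻¹ * w * x) = (w * w) * (x⁻¹ * w * x) by group, hw, one_mul]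
      _ = w * Equiv.swap a b := by rw [heq]
  have hfix : ∀ i, (x⁻¹ * w * x) i ≠ i := by
    intro i h
    apply hrevne (x i)
    have h2 : x ((x⁻¹ * w * x) i) = x i := congrArg x h
    simpa [Equiv.Perm.mul_apply, hwdef] using h2
  have hgg : (x⁻¹ * w * x) * (x⁻¹ * w * x) = 1 := by
    have h3 : (x⁻¹ * w * x) * (x⁻¹ * w * x) = x⁻¹ * (w * w) * x := by group
    rw [h3, hw, mul_one, inv_mul_cancel]
  have ha : (x⁻¹ * w * x) a = Fin.rev b := by
    rw [hg]
    simp [Equiv.Perm.mul_apply, hwdef]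
  by_cases hba : Fin.rev b = a
  · exact hfix a (ha.trans hba)
  · have hgga : (x⁻¹ * w * x) ((x⁻¹ * w * x) a) = a := by
      have := congrArg (fun u : Equiv.Perm (Fin (2 * n)) => u a) hgg
      simpa [Equiv.Perm.mul_apply] using this
    rw [ha] at hgga
    have hbb : Fin.rev b ≠ b := hrevne b
    have hsw : Equiv.swap a b (Fin.rev b) = Fin.rev b :=
      Equiv.swap_apply_of_ne_of_ne hba hbb
    rw [hg] at hgga
    have : Fin.rev (Fin.rev b) = a := by
      simpa [Equiv.Perm.mul_apply, hwdef, hsw] using hgga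
    rw [Fin.rev_rev] at this
    exact hab this.symm
end
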